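/- For every c ∈ (0, 1/2), K ≥ 2, and class-posterior vector η ∈ ℝ^K, the infimum over g ∈ ℝ^K of the pointwise conditional surrogate risk with the margin zero-one loss satisfies inf_{g ∈ ℝ^K} W_{ℓ01}(g; η) = ∑_{y=1}^K min(c·η_y, (1−c)·(1−η_y)) = min(c, 1 − max_y η_y); i.e., the minimal conditional cost-sensitive surrogate zero-one risk equals the Bayes conditional zero-one-c risk. -/

import Mathlib

/-!
Because `∑ η = 1`, the weight of `ℓ(-g_y)` in the risk is `(1 - c) ∑_{y' ≠ y} η_{y'} = (1 - c)(1 - η_y)`,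
so the risk splits over coordinates: coordinate `y` contributes
`c η_y ℓ(g_y) + (1 - c)(1 - η_y) ℓ(-g_y)`, whose minimum over `g_y` is
`min (c η_y) ((1 - c)(1 - η_y))`, attained by choosing the sign of `g_y`; minimising coordinatewise
gives the infimum. For the closed form, `c η_y` is the smaller term exactly when `η_y ≤ 1 - c`, and
as `c ≤ 1/2` only a largest coordinate can exceed `1 - c`.
-/

open Classical

/-- The maximum of a function on `Fin K` (for `K > 0`). -/
noncomputable def vmax {K : ℕ} (hK : 0 < K) (f : Fin K → ℝ) : ℝ :=
  Finset.univ.sup' ⟨⟨0, hK⟩, Finset.mem_univ _⟩ f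

/-- The margin zero-one loss: `ℓ01(z) = 1` if `z ≤ 0` and `0` otherwise. -/
noncomputable def mloss01 (z : ℝ) : ℝ := if z ≤ 0 then 1 else 0

/-- The cost-sensitive surrogate loss `L_CS^φ(g, y) = c·φ(g_y) + (1−c)·∑_{y'≠y} φ(−g_{y'})`. -/
noncomputable def LCS {K : ℕ} (φ : ℝ → ℝ) (c : ℝ) (g : Fin K → ℝ) (y : Fin K) : ℝ :=
  c * φ (g y) + (1 - c) * ∑ y' ∈ Finset.univ.erase y, φ (-(g y'))

/-- The pointwise conditional surrogate risk `W_φ(g; η) = ∑_y η_y · L_CS^φ(g, y)`. -/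
noncomputable def Wrisk {K : ℕ} (φ : ℝ → ℝ) (c : ℝ) (g η : Fin K → ℝ) : ℝ :=
  ∑ y, η y * LCS φ c g y

lemma Wrisk_eq_sum {K : ℕ} (φ : ℝ → ℝ) (c : ℝ) (g η : Fin K → ℝ) (hη1 : ∑ y, η y = 1) :
    Wrisk φ c g η = ∑ y, (c * η y * φ (g y) + (1 - c) * (1 - η y) * φ (-g y)) := by
  set S := ∑ y, φ (-g y)
  calc Wrisk φ c g η
      = ∑ y, ((c * η y * φ (g y) + (1 - c) * (1 - η y) * φ (-g y))
          + (1 - c) * (η y * S - φ (-g y))) := by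
        refine Finset.sum_congr rfl fun y _ => ?_
        rw [LCS, Finset.sum_erase_eq_sub (Finset.mem_univ y)]
        ring
    _ = ∑ y, (c * η y * φ (g y) + (1 - c) * (1 - η y) * φ (-g y))
          + (1 - c) * ((∑ y, η y) * S - S) := by
        rw [Finset.sum_add_distrib, ← Finset.mul_sum, Finset.sum_sub_distrib, Finset.sum_mul]
    _ = _ := by rw [hη1, one_mul, sub_self, mul_zero, add_zero]

lemma min_le_mul_mloss01_add_mul {a b : ℝ} (hb : 0 ≤ b) (z : ℝ) :
    min a b ≤ a * mloss01 z + b * mloss01 (-z) := by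
  rcases le_or_gt z 0 with hz | hz
  · have hneg : 0 ≤ mloss01 (-z) := by unfold mloss01; split_ifs <;> norm_num
    rw [mloss01, if_pos hz, mul_one]
    exact (min_le_left a b).trans (le_add_of_nonneg_right (mul_nonneg hb hneg))
  · rw [mloss01, mloss01, if_neg hz.not_ge, if_pos (by linarith), mul_zero, mul_one, zero_add]
    exact min_le_right a b

lemma exists_mul_mloss01_add_mul_eq_min (a b : ℝ) :
    ∃ z, a * mloss01 z + b * mloss01 (-z) = min a b := by
  rcases le_total a b with hab | hab
  · exact ⟨-1, by norm_num [mloss01, min_eq_left hab]⟩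
  · exact ⟨1, by norm_num [mloss01, min_eq_right hab]⟩

lemma isLeast_Wrisk_mloss01 {K : ℕ} {c : ℝ} (hc1 : c ≤ 1) {η : Fin K → ℝ}
    (hη0 : ∀ y, 0 ≤ η y) (hη1 : ∑ y, η y = 1) :
    IsLeast {r : ℝ | ∃ g : Fin K → ℝ, r = Wrisk mloss01 c g η}
      (∑ y, min (c * η y) ((1 - c) * (1 - η y))) := by
  have hη_le_one : ∀ y, η y ≤ 1 := fun y =>
    hη1 ▸ Finset.single_le_sum (fun y' _ => hη0 y') (Finset.mem_univ y)
  refine ⟨?_, ?_⟩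
  · choose g hg using fun y => exists_mul_mloss01_add_mul_eq_min (c * η y) ((1 - c) * (1 - η y))
    exact ⟨g, by rw [Wrisk_eq_sum _ _ _ _ hη1]; exact (Finset.sum_congr rfl fun y _ => hg y).symm⟩
  · rintro _ ⟨g, rfl⟩
    rw [Wrisk_eq_sum _ _ _ _ hη1]
    exact Finset.sum_le_sum fun y _ => min_le_mul_mloss01_add_mul
      (mul_nonneg (sub_nonneg.2 hc1) (sub_nonneg.2 (hη_le_one y))) (g y)

lemma min_mul_mul_one_sub_of_le {c t : ℝ} (h : t ≤ 1 - c) :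
    min (c * t) ((1 - c) * (1 - t)) = c * t :=
  min_eq_left (by linarith)

lemma min_mul_mul_one_sub_of_ge {c t : ℝ} (h : 1 - c ≤ t) :
    min (c * t) ((1 - c) * (1 - t)) = (1 - c) * (1 - t) :=
  min_eq_right (by linarith)

lemma sum_min_mul_mul_one_sub_eq {ι : Type*} [Fintype ι] {c : ℝ} (hc : c ≤ 1 / 2) {η : ι → ℝ}
    (hη0 : ∀ y, 0 ≤ η y) (hη1 : ∑ y, η y = 1) {y₀ : ι} (hy₀ : ∀ y, η y ≤ η y₀) :
    ∑ y, min (c * η y) ((1 - c) * (1 - η y)) = min c (1 - η y₀) := by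
  rcases le_total (η y₀) (1 - c) with hmax | hmax
  · rw [Finset.sum_congr rfl fun y _ => min_mul_mul_one_sub_of_le ((hy₀ y).trans hmax),
      ← Finset.mul_sum, hη1, mul_one, min_eq_left (by linarith)]
  · have hrest : ∑ y ∈ Finset.univ.erase y₀, η y = 1 - η y₀ := by
      rw [Finset.sum_erase_eq_sub (Finset.mem_univ y₀), hη1]
    -- every other coordinate is at most `1 - η y₀ ≤ c ≤ 1 - c`
    have hsmall : ∀ y ∈ Finset.univ.erase y₀, η y ≤ 1 - c := fun y hy => by
      linarith [hrest ▸ Finset.single_le_sum (fun y' _ => hη0 y') hy]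
    rw [← Finset.add_sum_erase _ _ (Finset.mem_univ y₀), min_mul_mul_one_sub_of_ge hmax,
      Finset.sum_congr rfl fun y hy => min_mul_mul_one_sub_of_le (hsmall y hy),
      ← Finset.mul_sum, hrest, min_eq_right (by linarith)]
    ring

/-- The infimum over score vectors of the pointwise conditional surrogate risk with
the margin zero-one loss equals `∑_y min(c·η_y, (1−c)(1−η_y))`, which in turn equals
the Bayes conditional zero-one-c risk `min(c, 1 − max_y η_y)`. -/
theorem stmt10 (c : ℝ) (hc : c < 1/2) (K : ℕ) (hK : 2 ≤ K)
    (η : Fin K → ℝ) (hη0 : ∀ y, 0 ≤ η y) (hη1 : ∑ y, η y = 1) :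
    sInf {r : ℝ | ∃ g : Fin K → ℝ, r = Wrisk mloss01 c g η} =
      ∑ y, min (c * η y) ((1 - c) * (1 - η y)) ∧
    ∑ y, min (c * η y) ((1 - c) * (1 - η y)) = min c (1 - vmax (by omega) η) := by
  refine ⟨(isLeast_Wrisk_mloss01 (by linarith) hη0 hη1).csInf_eq, ?_⟩
  obtain ⟨y₀, -, hy₀⟩ := Finset.exists_mem_eq_sup' ⟨⟨0, by omega⟩, Finset.mem_univ _⟩ η
  rw [vmax, hy₀]
  exact sum_min_mul_mul_one_sub_eq hc.le hη0 hη1 fun y => hy₀ ▸ Finset.le_sup' η (Finset.mem_univ y)
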